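/- arXiv:2410.14714 — 3 statements merged into one kernel-verified Lean document; each statement's English description precedes it below -/
import Mathlib

section
/- Let φ : T → T be a Lipschitz self-map of the rooted tree T such that |φ(v)| → ∞ as |v| → ∞. Then for every f ∈ Lip_0(T), the composition f ∘ φ belongs to Lip_0(T). -/
/-- An infinite, locally finite rooted tree in which every vertex other than
the root has degree greater than 1, together with the parent map. -/
structure LipTree (V : Type*) where
  root : V
  G : SimpleGraph V
  isTree : G.IsTree
  locFin : ∀ v : V, (G.neighborSet v).Finite
  infinite : Infinite V
  deg_gt : ∀ v : V, v ≠ root → 1 < (G.neighborSet v).ncard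
  par : V → V
  par_root : par root = root
  adj_par : ∀ v : V, v ≠ root → G.Adj v (par v)
  dist_par : ∀ v : V, v ≠ root → G.dist (par v) root + 1 = G.dist v root

namespace LipTree

variable {V : Type*}

/-- `|v|`, the distance from `v` to the root. -/
noncomputable def depth (T : LipTree V) (v : V) : ℕ := T.G.dist v T.root

/-- membership in the Lipschitz space `Lip(T)`. -/
def MemLip (T : LipTree V) (f : V → ℂ) : Prop :=
  ∃ C : ℝ, ∀ v : V, v ≠ T.root → ‖f v - f (T.par v)‖ ≤ C

/-- membership in the little Lipschitz space `Lip₀(T)`. -/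
def MemLip0 (T : LipTree V) (f : V → ℂ) : Prop :=
  T.MemLip f ∧ ∀ ε : ℝ, 0 < ε → ∃ N : ℕ, ∀ v : V, v ≠ T.root → N ≤ T.depth v →
    ‖f v - f (T.par v)‖ < ε

/-- the norm `‖f‖_Lip = max {|f(root)|, sup_{v ≠ root} |f(v) - f(v⁻)|}`. -/
noncomputable def normLip (T : LipTree V) (f : V → ℂ) : ℝ :=
  max (‖f T.root‖)
    (sSup {r : ℝ | ∃ v : V, v ≠ T.root ∧ r = ‖f v - f (T.par v)‖})

/-- `φ` is a Lipschitz self-map of the tree. -/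
noncomputable def LipschitzSelfMap (T : LipTree V) (φ : V → V) : Prop :=
  ∃ C : ℕ, ∀ v : V, v ≠ T.root → T.G.dist (φ v) (φ (T.par v)) ≤ C

/-- the Lipschitz number `λ_φ`. -/
noncomputable def lipNum (T : LipTree V) (φ : V → V) : ℝ :=
  sSup {r : ℝ | ∃ v : V, v ≠ T.root ∧ r = (T.G.dist (φ v) (φ (T.par v)) : ℝ)}

/-- the composition operator `C_φ` maps `Lip₀` into itself and is bounded there. -/
def BoundedOnLip0 (T : LipTree V) (φ : V → V) : Prop :=
  (∀ f : V → ℂ, T.MemLip0 f → T.MemLip0 (f ∘ φ)) ∧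
  ∃ C : ℝ, ∀ f : V → ℂ, T.MemLip0 f → T.normLip (f ∘ φ) ≤ C * T.normLip f

/-- `u` belongs to the sector `S_v` determined by `v`. -/
def InSector (T : LipTree V) (v u : V) : Prop := ∃ k : ℕ, T.par^[k] u = v

end LipTree

/-! Join `φ v` and `φ v⁻` by a geodesic, of length at most `λ_φ`. Every edge of the tree joins a
vertex to its parent, so `‖f (φ v) - f (φ v⁻)‖` is at most `λ_φ` times the largest increment of `f`
along that geodesic. The geodesic stays at depth at least `|φ v| - λ_φ`, which tends to infinity
with `|v|`; hence these increments tend to `0` when `f ∈ Lip₀`. -/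

namespace SimpleGraph

variable {V : Type*} {G : SimpleGraph V}

theorem Walk.dist_add_dist_le_length {u v w : V} (p : G.Walk u v) (hw : w ∈ p.support) :
    G.dist u w + G.dist w v ≤ p.length := by
  classical
  have hsplit := congrArg Walk.length (p.take_spec hw)
  rw [Walk.length_append] at hsplit
  rw [← hsplit]
  exact add_le_add (dist_le _) (dist_le _)

theorem Walk.norm_sub_le_length_mul {E : Type*} [SeminormedAddCommGroup E] (f : V → E) {c : ℝ}
    {u w : V} (p : G.Walk u w) (hc : ∀ d ∈ p.darts, ‖f d.fst - f d.snd‖ ≤ c) :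
    ‖f u - f w‖ ≤ p.length * c := by
  induction p with
  | nil => simp
  | @cons u v w huv p ih =>
    have hfirst := hc ⟨(u, v), huv⟩ (by simp)
    have hrest := ih fun d hd => hc d (by simp [hd])
    calc ‖f u - f w‖ ≤ ‖f u - f v‖ + ‖f v - f w‖ := norm_sub_le_norm_sub_add_norm_sub _ _ _
      _ ≤ c + p.length * c := add_le_add hfirst hrest
      _ = (p.cons huv).length * c := by push_cast [Walk.length_cons]; ring

end SimpleGraph

namespace LipTree

open SimpleGraph

variable {V : Type*} (T : LipTree V)

theorem depth_root : T.depth T.root = 0 := SimpleGraph.dist_self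

theorem depth_par_add_one {v : V} (hv : v ≠ T.root) : T.depth (T.par v) + 1 = T.depth v :=
  T.dist_par v hv

theorem depth_le_depth_add_dist (u w : V) : T.depth u ≤ T.depth w + T.G.dist u w := by
  rw [add_comm]
  exact T.isTree.connected.dist_triangle

theorem par_eq_of_adj {u x : V} (hux : T.G.Adj u x) (hdepth : T.depth x ≤ T.depth u) :
    T.par u = x := by
  have hu : u ≠ T.root := by
    rintro rfl
    have hx : T.G.dist x T.root = 0 := by simpa [depth, depth_root] using hdepth
    exact hux.ne' (T.isTree.connected.dist_eq_zero_iff.mp hx)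
  obtain ⟨q, -, hq⟩ := T.isTree.connected.exists_path_of_dist (T.par u) T.root
  obtain ⟨q', hq'path, hq'⟩ := T.isTree.connected.exists_path_of_dist x T.root
  have hpath : (Walk.cons (T.adj_par u hu) q).IsPath := by
    refine Walk.isPath_of_length_eq_dist _ ?_
    rw [Walk.length_cons, hq]
    exact T.depth_par_add_one hu
  -- `x` is no deeper than `u`, so a geodesic from `x` to the root cannot pass through `u`.
  have hu_notMem : u ∉ q'.support := fun hmem => by
    have := q'.dist_add_dist_le_length hmem
    rw [dist_eq_one_iff_adj.mpr hux.symm] at this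
    unfold depth at hdepth
    omega
  have hpaths := (T.isTree.isAcyclic.subsingleton_path u T.root).elim
    ⟨_, hpath⟩ ⟨Walk.cons hux q', hq'path.cons hu_notMem⟩
  simpa using congrArg (fun p : T.G.Path u T.root => p.1.snd) hpaths

theorem par_eq_or_par_eq_of_adj {a b : V} (hab : T.G.Adj a b) : T.par a = b ∨ T.par b = a := by
  rcases le_total (T.depth b) (T.depth a) with h | h
  · exact Or.inl (T.par_eq_of_adj hab h)
  · exact Or.inr (T.par_eq_of_adj hab.symm h)

variable {E : Type*} [SeminormedAddCommGroup E]

theorem norm_sub_le_of_adj {f : V → E} {c : ℝ} {n : ℕ}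
    (hf : ∀ v, v ≠ T.root → n < T.depth v → ‖f v - f (T.par v)‖ ≤ c)
    {a b : V} (hab : T.G.Adj a b) (ha : n ≤ T.depth a) (hb : n ≤ T.depth b) :
    ‖f a - f b‖ ≤ c := by
  have of_par_eq : ∀ x y, T.G.Adj x y → T.par x = y → n ≤ T.depth y → ‖f x - f y‖ ≤ c := by
    intro x y hxy hpar hy
    have hx : x ≠ T.root := fun hx => hxy.ne (by rw [← hpar, hx, T.par_root])
    have hdepth := T.depth_par_add_one hx
    subst hpar
    exact hf x hx (by omega)
  rcases T.par_eq_or_par_eq_of_adj hab with h | h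
  · exact of_par_eq a b hab h hb
  · rw [norm_sub_rev]
    exact of_par_eq b a hab.symm h ha

/-- A geodesic from `u` to `w` stays at depth at least `|u| - d(u, w)`. -/
theorem norm_sub_le_dist_mul {f : V → E} {c : ℝ} {u w : V}
    (hf : ∀ v, v ≠ T.root → T.depth u - T.G.dist u w < T.depth v → ‖f v - f (T.par v)‖ ≤ c) :
    ‖f u - f w‖ ≤ T.G.dist u w * c := by
  obtain ⟨p, -, hp⟩ := T.isTree.connected.exists_path_of_dist u w
  have hdeep : ∀ y ∈ p.support, T.depth u - T.G.dist u w ≤ T.depth y := fun y hy => by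
    have h₁ := T.depth_le_depth_add_dist u y
    have h₂ := p.dist_add_dist_le_length hy
    omega
  rw [← hp]
  exact p.norm_sub_le_length_mul f fun d hd => T.norm_sub_le_of_adj hf d.adj
    (hdeep _ (p.dart_fst_mem_support_of_mem_darts hd))
    (hdeep _ (p.dart_snd_mem_support_of_mem_darts hd))

end LipTree

/-- If `φ` is Lipschitz and `|φ(v)| → ∞` as `|v| → ∞`, then `C_φ` maps `Lip₀` into itself. -/
theorem comp_maps_lip0 {V : Type*} (T : LipTree V) (φ : V → V)
    (hφ : T.LipschitzSelfMap φ)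
    (hdiv : ∀ M : ℕ, ∃ N : ℕ, ∀ v : V, N ≤ T.depth v → M ≤ T.depth (φ v)) :
    ∀ f : V → ℂ, T.MemLip0 f → T.MemLip0 (f ∘ φ) := by
  obtain ⟨C, hC⟩ := hφ
  rintro f ⟨⟨c, hc⟩, hsmall⟩
  refine ⟨⟨C * max c 0, fun v hv => ?_⟩, fun ε hε => ?_⟩
  · calc ‖f (φ v) - f (φ (T.par v))‖
        ≤ T.G.dist (φ v) (φ (T.par v)) * max c 0 :=
          T.norm_sub_le_dist_mul fun x hx _ => (hc x hx).trans (le_max_left c 0)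
      _ ≤ C * max c 0 := by gcongr; exact_mod_cast hC v hv
  · obtain ⟨N, hN⟩ := hsmall (ε / (C + 1)) (by positivity)
    obtain ⟨M, hM⟩ := hdiv (N + C)
    refine ⟨M, fun v hv hMv => ?_⟩
    have hφv := hM v hMv
    have hdist := hC v hv
    calc ‖f (φ v) - f (φ (T.par v))‖
        ≤ T.G.dist (φ v) (φ (T.par v)) * (ε / (C + 1)) :=
          T.norm_sub_le_dist_mul fun x hx hdeep => (hN x hx (by omega)).le
      _ ≤ C * (ε / (C + 1)) := by gcongr
      _ < ε := by
          rw [← mul_div_assoc, div_lt_iff₀ (by positivity)]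
          linarith
end

section
/- Let φ : T → T be Lipschitz and let A = { v ∈ T : φ is not constant on S_v }, where S_v is the sector consisting of v and all its descendants. If either A is finite, or A is infinite and |φ(v)| → ∞ as |v| → ∞ with v ranging over A, then C_φ maps Lip_0(T) into itself. -/
namespace SimpleGraph

variable {V : Type*} {G : SimpleGraph V}

theorem IsTree.eq_of_adj_of_dist_add_one (hG : G.IsTree) {r x y z : V} (hy : G.Adj x y)
    (hz : G.Adj x z) (hdy : G.dist y r + 1 = G.dist x r) (hdz : G.dist z r + 1 = G.dist x r) :
    y = z := by
  obtain ⟨p, hp⟩ := hG.connected.exists_walk_length_eq_dist y r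
  obtain ⟨q, hq⟩ := hG.connected.exists_walk_length_eq_dist z r
  have hpy : (Walk.cons hy p).IsPath := Walk.isPath_of_length_eq_dist _ (by simp [hp, hdy])
  have hqz : (Walk.cons hz q).IsPath := Walk.isPath_of_length_eq_dist _ (by simp [hq, hdz])
  have := (hG.existsUnique_path x r).unique hpy hqz
  simpa using congrArg Walk.snd this

end SimpleGraph

namespace LipTree

variable {V : Type*} (T : LipTree V)

theorem ne_root_and_eq_par_of_adj {x y : V} (hadj : T.G.Adj x y)
    (hd : T.depth y + 1 = T.depth x) : x ≠ T.root ∧ y = T.par x := by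
  have hx : x ≠ T.root := by
    rintro rfl
    simp [depth] at hd
  exact ⟨hx, T.isTree.eq_of_adj_of_dist_add_one hadj (T.adj_par x hx) hd (T.dist_par x hx)⟩

theorem eq_par_or_eq_par_of_adj {x y : V} (hadj : T.G.Adj x y) :
    (x ≠ T.root ∧ y = T.par x) ∨ (y ≠ T.root ∧ x = T.par y) := by
  rcases T.isTree.dist_eq_dist_add_one_of_adj T.root hadj with hd | hd
  · refine .inl (T.ne_root_and_eq_par_of_adj hadj ?_)
    simp only [depth, SimpleGraph.dist_comm (v := T.root), hd]
  · refine .inr (T.ne_root_and_eq_par_of_adj hadj.symm ?_)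
    simp only [depth, SimpleGraph.dist_comm (v := T.root), hd]

variable {T} {φ : V → V} {f : V → ℂ}

theorem norm_sub_le_length_mul {N : ℕ} {δ : ℝ}
    (hf : ∀ u, u ≠ T.root → N ≤ T.depth u → ‖f u - f (T.par u)‖ ≤ δ)
    {a b : V} (w : T.G.Walk a b) (hw : ∀ z ∈ w.support, N ≤ T.depth z) :
    ‖f a - f b‖ ≤ w.length * δ := by
  induction w with
  | nil => simp
  | @cons a c b hadj q ih =>
    have hedge : ‖f a - f c‖ ≤ δ := by
      rcases T.eq_par_or_eq_par_of_adj hadj with ⟨ha, rfl⟩ | ⟨hc, rfl⟩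
      · exact hf a ha (hw a (by simp))
      · rw [norm_sub_rev]
        exact hf c hc (hw c (by simp))
    calc ‖f a - f b‖ ≤ ‖f a - f c‖ + ‖f c - f b‖ := norm_sub_le_norm_sub_add_norm_sub _ _ _
      _ ≤ δ + q.length * δ := add_le_add hedge (ih fun z hz => hw z (by simp [hz]))
      _ = (q.cons hadj).length * δ := by push_cast [SimpleGraph.Walk.length_cons]; ring

theorem norm_sub_le_mul_of_dist_le {a b : V} {n : ℕ} {δ : ℝ} (hδ : 0 ≤ δ)
    (hab : T.G.dist a b ≤ n)
    (hf : ∀ u, u ≠ T.root → T.depth b - n ≤ T.depth u → ‖f u - f (T.par u)‖ ≤ δ) :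
    ‖f a - f b‖ ≤ n * δ := by
  obtain ⟨w, hw⟩ := T.isTree.connected.exists_walk_length_eq_dist a b
  have hsupp : ∀ z ∈ w.support, T.depth b - n ≤ T.depth z := by
    classical
    intro z hz
    have hzb : T.G.dist z b ≤ w.length :=
      (SimpleGraph.dist_le _).trans (w.length_dropUntil_le_length hz)
    have := T.isTree.connected.dist_triangle (u := b) (v := z) (w := T.root)
    simp only [depth, SimpleGraph.dist_comm (u := b)] at this ⊢
    omega
  calc ‖f a - f b‖ ≤ w.length * δ := norm_sub_le_length_mul hf w hsupp
    _ ≤ n * δ := by gcongr; exact_mod_cast hw ▸ hab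


theorem memLip_comp (hφ : T.LipschitzSelfMap φ) (hf : T.MemLip f) : T.MemLip (f ∘ φ) := by
  obtain ⟨C, hC⟩ := hφ
  obtain ⟨L, hL⟩ := hf
  exact ⟨C * max L 0, fun v hv => norm_sub_le_mul_of_dist_le (f := f) (le_max_right L 0)
    (hC v hv) fun u hu _ => (hL u hu).trans (le_max_left L 0)⟩

theorem memLip0_comp_of_depth_tendsto (hφ : T.LipschitzSelfMap φ) {A : Set V}
    (hconst : ∀ v, T.par v ∉ A → φ v = φ (T.par v))
    (hfar : ∀ M : ℕ, ∃ N : ℕ, ∀ v ∈ A, N ≤ T.depth v → M ≤ T.depth (φ v))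
    (hf : T.MemLip0 f) : T.MemLip0 (f ∘ φ) := by
  refine ⟨memLip_comp hφ hf.1, fun ε hε => ?_⟩
  obtain ⟨C, hC⟩ := hφ
  have hC1 : (0 : ℝ) < C + 1 := by positivity
  obtain ⟨N₀, hN₀⟩ := hf.2 (ε / (C + 1)) (by positivity)
  obtain ⟨N, hN⟩ := hfar (N₀ + C)
  refine ⟨N + 1, fun v hv hdv => ?_⟩
  by_cases hpv : T.par v ∈ A
  · have hdepth : N₀ + C ≤ T.depth (φ (T.par v)) :=
      hN _ hpv (by have := T.dist_par v hv; unfold depth at hdv ⊢; omega)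
    calc ‖f (φ v) - f (φ (T.par v))‖ ≤ C * (ε / (C + 1)) :=
          norm_sub_le_mul_of_dist_le (by positivity) (hC v hv)
            fun u hu hdu => (hN₀ u hu (by omega)).le
      _ < ε := by rw [mul_div_assoc', div_lt_iff₀ hC1]; linarith
  · simpa [hconst v hpv] using hε

end LipTree

/-- Let `A` be the set of vertices `v` such that `φ` is not constant on the sector `S_v`.
If `A` is finite, or `A` is infinite and `|φ(v)| → ∞` as `|v| → ∞` along `v ∈ A`, then
`C_φ` maps `Lip₀` into itself. -/
theorem comp_maps_lip0_of_sector_condition {V : Type*} (T : LipTree V) (φ : V → V)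
    (hφ : T.LipschitzSelfMap φ)
    (A : Set V)
    (hA : A = {v : V | ¬ ∀ u₁ u₂ : V, T.InSector v u₁ → T.InSector v u₂ → φ u₁ = φ u₂})
    (h : A.Finite ∨ (A.Infinite ∧
      ∀ M : ℕ, ∃ N : ℕ, ∀ v ∈ A, N ≤ T.depth v → M ≤ T.depth (φ v))) :
    ∀ f : V → ℂ, T.MemLip0 f → T.MemLip0 (f ∘ φ) := by
  have hconst : ∀ v, T.par v ∉ A → φ v = φ (T.par v) := by
    intro v hpv
    simp only [hA, Set.mem_ofPred_eq, not_not] at hpv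
    exact hpv v (T.par v) ⟨1, rfl⟩ ⟨0, rfl⟩
  have hfar : ∀ M : ℕ, ∃ N : ℕ, ∀ v ∈ A, N ≤ T.depth v → M ≤ T.depth (φ v) := by
    rcases h with hfin | ⟨-, hfar⟩
    · obtain ⟨D, hD⟩ := (hfin.image T.depth).bddAbove
      exact fun _ => ⟨D + 1, fun v hv hdv => absurd (hD ⟨v, hv, rfl⟩) (by omega)⟩
    · exact hfar
  exact fun f => LipTree.memLip0_comp_of_depth_tendsto hφ hconst hfar
end

section
/- Let φ : T → T be injective but not surjective, with C_φ bounded on Lip_0(T). Then every λ with |λ| < 1, as well as λ = 1, is an eigenvalue of C_φ acting on Lip_0(T). -/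
open Filter Topology

theorem Function.iterate_injective_of_notMem_range {α : Type*} {f : α → α}
    (hf : Function.Injective f) {x : α} (hx : x ∉ Set.range f) :
    Function.Injective (fun n => f^[n] x) := by
  refine .of_lt_imp_ne fun m n hmn h => hx ⟨f^[n - m - 1] x, ?_⟩
  have hx_periodic : x = f^[n - m] x := by
    refine hf.iterate m ?_
    rw [← Function.iterate_add_apply, Nat.add_sub_cancel' hmn.le]
    exact h
  calc f (f^[n - m - 1] x) = f^[n - m] x := by
        rw [← Function.iterate_succ_apply' f]
        congr 2
        omega
    _ = x := hx_periodic.symm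

theorem Function.extend_iterate_comp {α β : Type*} {f : α → α} (hf : Function.Injective f)
    {x : α} (hx : x ∉ Set.range f) (g : ℕ → β) (e : α → β) :
    Function.extend (fun n => f^[n] x) g e ∘ f =
      Function.extend (fun n => f^[n] x) (fun n => g (n + 1)) (e ∘ f) := by
  have horbit := Function.iterate_injective_of_notMem_range hf hx
  funext y
  by_cases hy : ∃ n, f^[n] x = y
  · obtain ⟨n, rfl⟩ := hy
    simp only [Function.comp_apply, ← Function.iterate_succ_apply' f]
    exact (horbit.extend_apply _ _ (n + 1)).trans
      (horbit.extend_apply (fun n => g (n + 1)) _ n).symm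
  · have hfy : ¬ ∃ n, f^[n] x = f y := by
      rintro ⟨_ | n, hn⟩
      · exact hx ⟨y, hn.symm⟩
      · rw [Function.iterate_succ_apply'] at hn
        exact hy ⟨n, hf hn⟩
    simp only [Function.comp_apply, Function.extend_apply' _ _ _ hy,
      Function.extend_apply' _ _ _ hfy]

theorem Function.tendsto_extend_zero_comap_atTop {α β : Type*} [NormedAddCommGroup β]
    (o : ℕ → α) {g : ℕ → β} (hg : Tendsto g atTop (𝓝 0)) (d : α → ℕ) :
    Tendsto (Function.extend o g 0) (comap d atTop) (𝓝 0) := by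
  classical
  rw [(atTop_basis.comap d).tendsto_iff Metric.nhds_basis_ball]
  intro ε hε
  obtain ⟨N, hN⟩ := (Metric.nhds_basis_ball.tendsto_right_iff.1 hg ε hε).exists_forall_of_atTop
  -- beyond this depth, a point can only be `o n` with `N ≤ n`
  refine ⟨(Finset.range N).sup (d ∘ o) + 1, trivial, fun u hu => ?_⟩
  rw [Function.extend_def]
  split_ifs with h
  · refine hN _ (not_lt.1 fun hlt => ?_)
    have := Finset.le_sup (f := d ∘ o) (Finset.mem_range.2 hlt)
    simp only [Set.mem_preimage, Set.mem_Ici, Function.comp_apply, Classical.choose_spec h] at hu this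
    omega
  · simpa using hε

noncomputable def orbitGeometric {V : Type*} (φ : V → V) (w : V) (lam : ℂ) : V → ℂ :=
  Function.extend (fun n => φ^[n] w) (lam ^ ·) 0

section orbitGeometric

variable {V : Type*} {φ : V → V} {w : V}

theorem orbitGeometric_comp (hφ : Function.Injective φ) (hw : w ∉ Set.range φ) (lam : ℂ) :
    orbitGeometric φ w lam ∘ φ = lam • orbitGeometric φ w lam := by
  rw [orbitGeometric, Function.extend_iterate_comp hφ hw, ← Function.extend_smul]
  congr 1
  · funext n
    simp only [Pi.smul_apply, smul_eq_mul, pow_succ']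
  · simp

theorem orbitGeometric_self (hφ : Function.Injective φ) (hw : w ∉ Set.range φ) (lam : ℂ) :
    orbitGeometric φ w lam w = 1 :=
  (Function.iterate_injective_of_notMem_range hφ hw).extend_apply _ _ 0 |>.trans (pow_zero lam)

theorem norm_orbitGeometric_le_one {lam : ℂ} (hlam : ‖lam‖ ≤ 1) (v : V) :
    ‖orbitGeometric φ w lam v‖ ≤ 1 := by
  classical
  rw [orbitGeometric, Function.extend_def]
  split_ifs
  · exact (norm_pow lam _).trans_le (pow_le_one₀ (norm_nonneg lam) hlam)
  · simp

end orbitGeometric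

namespace LipTree

variable {V : Type*} (T : LipTree V)

theorem memLip0_of_tendsto_zero {f : V → ℂ} {M : ℝ} (hM : ∀ v, ‖f v‖ ≤ M)
    (hf : Tendsto f (comap T.depth atTop) (𝓝 0)) : T.MemLip0 f := by
  refine ⟨⟨M + M, fun v _ => (norm_sub_le _ _).trans (add_le_add (hM _) (hM _))⟩, fun ε hε => ?_⟩
  obtain ⟨N, -, hN⟩ := ((atTop_basis.comap T.depth).tendsto_iff Metric.nhds_basis_ball).1 hf
    (ε / 2) (half_pos hε)
  have hsmall : ∀ v, N ≤ T.depth v → ‖f v‖ < ε / 2 := fun v hv => by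
    simpa using hN v hv
  refine ⟨N + 1, fun v hv hNv => ?_⟩
  have hpar : T.depth (T.par v) + 1 = T.depth v := T.dist_par v hv
  calc ‖f v - f (T.par v)‖ ≤ ‖f v‖ + ‖f (T.par v)‖ := norm_sub_le _ _
    _ < ε / 2 + ε / 2 := add_lt_add (hsmall v (by omega)) (hsmall _ (by omega))
    _ = ε := add_halves ε

theorem memLip0_const (c : ℂ) : T.MemLip0 fun _ => c :=
  ⟨⟨0, fun _ _ => by simp⟩, fun _ hε => ⟨0, fun _ _ _ => by simpa using hε⟩⟩

theorem memLip0_orbitGeometric {φ : V → V} {w : V} {lam : ℂ} (hlam : ‖lam‖ < 1) :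
    T.MemLip0 (orbitGeometric φ w lam) :=
  T.memLip0_of_tendsto_zero (norm_orbitGeometric_le_one hlam.le)
    (Function.tendsto_extend_zero_comap_atTop _ (tendsto_pow_atTop_nhds_zero_of_norm_lt_one hlam) _)

end LipTree

theorem point_spectrum_contains_disk_general {V : Type*} (T : LipTree V) (φ : V → V)
    (hinj : Function.Injective φ) (hnsurj : ¬ Function.Surjective φ) :
    ∀ lam : ℂ, (‖lam‖ < 1 ∨ lam = 1) →
      ∃ f : V → ℂ, T.MemLip0 f ∧ f ≠ 0 ∧ f ∘ φ = lam • f := by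
  rintro lam (hlam | rfl)
  · obtain ⟨w, hw⟩ : ∃ w, w ∉ Set.range φ := by
      simpa [Function.Surjective, Set.mem_range] using hnsurj
    refine ⟨orbitGeometric φ w lam, T.memLip0_orbitGeometric hlam, fun h => ?_,
      orbitGeometric_comp hinj hw lam⟩
    simpa [h] using orbitGeometric_self hinj hw lam
  · exact ⟨fun _ => 1, T.memLip0_const 1, fun h => one_ne_zero (congrFun h T.root),
      (one_smul ℂ _).symm⟩

/-- If `φ` is injective but not surjective and `C_φ` is bounded on `Lip₀`, then `1` and
every `λ` with `|λ| < 1` are eigenvalues of `C_φ`. -/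
theorem point_spectrum_contains_disk {V : Type*} (T : LipTree V) (φ : V → V)
    (hinj : Function.Injective φ) (hnsurj : ¬ Function.Surjective φ)
    (hbdd : T.BoundedOnLip0 φ) :
    ∀ lam : ℂ, (‖lam‖ < 1 ∨ lam = 1) →
      ∃ f : V → ℂ, T.MemLip0 f ∧ f ≠ 0 ∧ f ∘ φ = lam • f :=
  point_spectrum_contains_disk_general T φ hinj hnsurj
end
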